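/- arXiv:2007.02736 — 6 statements merged into one kernel-verified Lean document; each statement's English description precedes it below -/
import Mathlib

section
/- Let O₁ be the ALCO ontology consisting of the concept inclusions {a} ⊑ ∃r.{a}, A ⊓ ¬{a} ⊑ ∀r.(¬{a} → ¬A), and ¬A ⊓ ¬{a} ⊑ ∀r.(¬{a} → A). Then in every model I of O₁ and every element d ∈ Δ^I, d = a^I if and only if (d,d) ∈ r^I. That is, {a} is implicitly definable from the signature Σ = {r, A} under O₁. -/
/-- in every model of the ALCO ontology
`O₁ = { {a} ⊑ ∃r.{a},  A ⊓ ¬{a} ⊑ ∀r.(¬{a} → ¬A),  ¬A ⊓ ¬{a} ⊑ ∀r.(¬{a} → A) }`,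
an element equals `a` iff it is `r`-reflexive; hence `{a}` is implicitly definable
from `Σ = {r, A}` under `O₁`. The three hypotheses express satisfaction of the
three concept inclusions. -/
theorem nominal_implicitly_definable {Δ : Type} (aI : Δ) (AI : Set Δ)
    (rI : Set (Δ × Δ))
    (h1 : (aI, aI) ∈ rI)
    (h2 : ∀ d ∈ AI, d ≠ aI → ∀ e, (d, e) ∈ rI → e ≠ aI → e ∉ AI)
    (h3 : ∀ d, d ∉ AI → d ≠ aI → ∀ e, (d, e) ∈ rI → e ≠ aI → e ∈ AI) :
    ∀ d : Δ, d = aI ↔ (d, d) ∈ rI := by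
  intro d
  constructor
  · rintro rfl; exact h1
  · intro hr
    by_contra hne
    by_cases hA : d ∈ AI
    · exact h2 d hA hne d hr hne hA
    · exact hA (h3 d hA hne d hr hne)
end

section
/- Let O₁ be the ALCO ontology consisting of {a} ⊑ ∃r.{a}, A ⊓ ¬{a} ⊑ ∀r.(¬{a} → ¬A), and ¬A ⊓ ¬{a} ⊑ ∀r.(¬{a} → A), and let Σ = {r, A}. There is no ALCO concept D using only symbols from Σ such that O₁ ⊨ {a} ≡ D. In particular, consider the interpretation I with domain {c, d}, a^I = c, r^I = {(c,c),(c,d),(d,c)}, A^I = {c,d}: I is a model of O₁, the full relation Δ^I × Δ^I is an ALCO(Σ)-bisimulation on I, and hence c and d satisfy the same ALCO(Σ)-concepts while c ∈ {a}^I and d ∉ {a}^I. -/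
/-- An ALCO interpretation over concept names `C`, role names `R`, and individual
names `N`, with domain `Δ`. -/
structure InterpO (C R N Δ : Type) where
  conc : C → Set Δ
  role : R → Set (Δ × Δ)
  ind : N → Δ

/-- ALCO concepts (ALC plus nominals). -/
inductive ConceptO (C R N : Type) : Type
  | top : ConceptO C R N
  | atom : C → ConceptO C R N
  | nom : N → ConceptO C R N
  | neg : ConceptO C R N → ConceptO C R N
  | inter : ConceptO C R N → ConceptO C R N → ConceptO C R N
  | ex : R → ConceptO C R N → ConceptO C R N

/-- Semantics of ALCO concepts. -/
def InterpO.sem {C R N Δ : Type} (I : InterpO C R N Δ) : ConceptO C R N → Set Δ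
  | .top => Set.univ
  | .atom A => I.conc A
  | .nom a => {I.ind a}
  | .neg c => (I.sem c)ᶜ
  | .inter c d => I.sem c ∩ I.sem d
  | .ex r c => {d | ∃ e, (d, e) ∈ I.role r ∧ e ∈ I.sem c}

/-- An ALCO concept uses only symbols from the signature `(σC, σR, σN)`. -/
def ConceptO.inSig {C R N : Type} (σC : Set C) (σR : Set R) (σN : Set N) :
    ConceptO C R N → Prop
  | .top => True
  | .atom A => A ∈ σC
  | .nom a => a ∈ σN
  | .neg c => c.inSig σC σR σN
  | .inter c d => c.inSig σC σR σN ∧ d.inSig σC σR σN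
  | .ex r c => r ∈ σR ∧ c.inSig σC σR σN

/-- `S` is an ALCO(Σ)-bisimulation between `I` and `J`. -/
structure IsBisimO {C R N Δ₁ Δ₂ : Type} (σC : Set C) (σR : Set R) (σN : Set N)
    (I : InterpO C R N Δ₁) (J : InterpO C R N Δ₂) (S : Set (Δ₁ × Δ₂)) : Prop where
  atomC : ∀ d e, (d, e) ∈ S → ∀ A ∈ σC, (d ∈ I.conc A ↔ e ∈ J.conc A)
  atomI : ∀ d e, (d, e) ∈ S → ∀ a ∈ σN, (d = I.ind a ↔ e = J.ind a)
  forth : ∀ d e, (d, e) ∈ S → ∀ r ∈ σR, ∀ d', (d, d') ∈ I.role r →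
      ∃ e', (e, e') ∈ J.role r ∧ (d', e') ∈ S
  back : ∀ d e, (d, e) ∈ S → ∀ r ∈ σR, ∀ e', (e, e') ∈ J.role r →
      ∃ d', (d, d') ∈ I.role r ∧ (d', e') ∈ S

/-- `I` is a model of the ontology `O₁` consisting of `{a} ⊑ ∃r.{a}`,
`A ⊓ ¬{a} ⊑ ∀r.(¬{a} → ¬A)`, and `¬A ⊓ ¬{a} ⊑ ∀r.(¬{a} → A)`, where the unique
concept name is `A`, the unique role name is `r` and the unique individual name
is `a`. -/
def ModelsO1 {Δ : Type} (I : InterpO Unit Unit Unit Δ) : Prop :=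
  (I.ind (), I.ind ()) ∈ I.role () ∧
  (∀ d ∈ I.conc (), d ≠ I.ind () →
    ∀ e, (d, e) ∈ I.role () → e ≠ I.ind () → e ∉ I.conc ()) ∧
  (∀ d, d ∉ I.conc () → d ≠ I.ind () →
    ∀ e, (d, e) ∈ I.role () → e ≠ I.ind () → e ∈ I.conc ())

/-- The concrete model of `O₁` with domain `{c, d}` (here `c = false`, `d = true`),
`a^I = c`, `r^I = {(c,c),(c,d),(d,c)}`, `A^I = {c,d}`. -/
def Iconc : InterpO Unit Unit Unit Bool where
  conc := fun _ => Set.univ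
  role := fun _ => {p : Bool × Bool | p ≠ (true, true)}
  ind := fun _ => false


lemma Iconc_invariant : ∀ D : ConceptO Unit Unit Unit, D.inSig Set.univ Set.univ ∅ →
    (false ∈ Iconc.sem D ↔ true ∈ Iconc.sem D) := by
  intro D hD
  induction D with
  | top => simp [InterpO.sem]
  | atom A => simp [InterpO.sem, Iconc]
  | nom a => exact absurd hD (by simp [ConceptO.inSig])
  | neg c ih => simp only [InterpO.sem, Set.mem_compl_iff]; rw [ih hD]
  | inter c d ihc ihd =>
      obtain ⟨h1, h2⟩ := hD
      simp only [InterpO.sem, Set.mem_inter_iff]; rw [ihc h1, ihd h2]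
  | ex r c ih =>
      have ihc := ih hD.2
      simp only [InterpO.sem, Set.mem_setOf_eq]
      constructor
      · rintro ⟨e, -, he⟩
        have : (false : Bool) ∈ Iconc.sem c := by
          cases e with
          | false => exact he
          | true => exact ihc.mpr he
        exact ⟨false, by simp [Iconc], this⟩
      · rintro ⟨e, hr, he⟩
        cases e with
        | false => exact ⟨false, by simp [Iconc], he⟩
        | true => exact absurd hr (by simp [Iconc])

/-- there is no ALCO concept `D` over `Σ = {r, A}` with
`O₁ ⊨ {a} ≡ D`. In particular, the interpretation `Iconc` is a model of `O₁`,
the full relation on its domain is an ALCO(Σ)-bisimulation on it, `c` and `d`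
satisfy the same ALCO(Σ)-concepts, yet `c ∈ {a}^I` and `d ∉ {a}^I`. -/
theorem nominal_not_explicitly_definable :
    (¬ ∃ D : ConceptO Unit Unit Unit, D.inSig Set.univ Set.univ ∅ ∧
      ∀ (Δ : Type) (J : InterpO Unit Unit Unit Δ), ModelsO1 J →
        J.sem D = {J.ind ()}) ∧
    ModelsO1 Iconc ∧
    IsBisimO Set.univ Set.univ ∅ Iconc Iconc Set.univ ∧
    (∀ D : ConceptO Unit Unit Unit, D.inSig Set.univ Set.univ ∅ →
      (false ∈ Iconc.sem D ↔ true ∈ Iconc.sem D)) ∧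
    (false : Bool) = Iconc.ind () ∧ (true : Bool) ≠ Iconc.ind () := by
  refine ⟨?_, ?_, ?_, Iconc_invariant, rfl, by simp [Iconc]⟩
  · rintro ⟨D, hsig, hD⟩
    have h := hD Bool Iconc ⟨by simp [Iconc], fun d hd hne e hre hene => by
        simp only [Iconc, ne_eq, Bool.not_eq_false] at hne hene
        simp [Iconc, hne, hene] at hre, fun d hd => absurd (Set.mem_univ d) hd⟩
    have h1 : (false : Bool) ∈ Iconc.sem D := by rw [h]; rfl
    have h2 : (true : Bool) ∈ Iconc.sem D := (Iconc_invariant D hsig).mp h1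
    rw [h] at h2
    simp [Iconc] at h2
  · exact ⟨by simp [Iconc], fun d hd hne e hre hene => by
      simp only [Iconc, ne_eq, Bool.not_eq_false] at hne hene
      simp [Iconc, hne, hene] at hre,
      fun d hd => absurd (Set.mem_univ d) hd⟩
  · constructor
    · intro d e _ A _; simp [Iconc]
    · intro d e _ a ha; exact absurd ha (Set.notMem_empty a)
    · intro d e _ r _ d' hd'
      exact ⟨false, by simp [Iconc], trivial⟩
    · intro d e _ r _ e' he'
      exact ⟨false, by simp [Iconc], trivial⟩
end

section
/- Let O₂ be the ALCH ontology consisting of the role inclusions r ⊑ r₁ and r ⊑ r₂ and the concept inclusions ¬∃r.⊤ ⊓ ∃r₁.A ⊑ ∀r₂.¬A and ¬∃r.⊤ ⊓ ∃r₁.¬A ⊑ ∀r₂.A. Then in every model I of O₂ and every d ∈ Δ^I: there exists e with (d,e) ∈ r^I if and only if there exists e with (d,e) ∈ r₁^I and (d,e) ∈ r₂^I. Hence ∃r.⊤ is implicitly definable from Σ = {r₁, r₂} under O₂. -/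
/-- in every model of the ALCH ontology
`O₂ = { r ⊑ r₁, r ⊑ r₂, ¬∃r.⊤ ⊓ ∃r₁.A ⊑ ∀r₂.¬A, ¬∃r.⊤ ⊓ ∃r₁.¬A ⊑ ∀r₂.A }`,
an element has an `r`-successor iff it has a common `r₁`- and `r₂`-successor;
hence `∃r.⊤` is implicitly definable from `Σ = {r₁, r₂}` under `O₂`. -/
theorem exists_r_implicitly_definable {Δ : Type} (AI : Set Δ)
    (rI r1I r2I : Set (Δ × Δ))
    (hr1 : rI ⊆ r1I) (hr2 : rI ⊆ r2I)
    (h1 : ∀ d, (¬ ∃ e, (d, e) ∈ rI) → (∃ e, (d, e) ∈ r1I ∧ e ∈ AI) →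
      ∀ e, (d, e) ∈ r2I → e ∉ AI)
    (h2 : ∀ d, (¬ ∃ e, (d, e) ∈ rI) → (∃ e, (d, e) ∈ r1I ∧ e ∉ AI) →
      ∀ e, (d, e) ∈ r2I → e ∈ AI) :
    ∀ d : Δ, (∃ e, (d, e) ∈ rI) ↔ ∃ e, (d, e) ∈ r1I ∧ (d, e) ∈ r2I := by
  intro d
  constructor
  · rintro ⟨e, he⟩
    exact ⟨e, hr1 he, hr2 he⟩
  · rintro ⟨e, he1, he2⟩
    by_contra hno
    by_cases hA : e ∈ AI
    · exact h1 d hno ⟨e, he1, hA⟩ e he2 hA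
    · exact hA (h2 d hno ⟨e, he1, hA⟩ e he2)
end

section
/- Let O₁, O₂ be ALC ontologies, C₁, C₂ be ALC concepts, and Σ the intersection of the signatures of (O₁,C₁) and (O₂,C₂). If there exist a model I₁ of O₁ ∪ O₂, a model I₂ of O₁ ∪ O₂, and elements d₁ ∈ C₁^{I₁}, d₂ ∈ (¬C₂)^{I₂} with I₁,d₁ ALC(Σ)-bisimilar to I₂,d₂, then there exists no ALC-interpolant for C₁ ⊑ C₂ under O₁ ∪ O₂. -/
/-- An ALC interpretation over concept names `C` and role names `R` with domain `Δ`. -/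
structure Interp (C R Δ : Type) where
  conc : C → Set Δ
  role : R → Set (Δ × Δ)

/-- ALC concepts. -/
inductive ALCConcept (C R : Type) : Type
  | top : ALCConcept C R
  | atom : C → ALCConcept C R
  | neg : ALCConcept C R → ALCConcept C R
  | inter : ALCConcept C R → ALCConcept C R → ALCConcept C R
  | ex : R → ALCConcept C R → ALCConcept C R

/-- Semantics of ALC concepts. -/
def Interp.sem {C R Δ : Type} (I : Interp C R Δ) : ALCConcept C R → Set Δ
  | .top => Set.univ
  | .atom A => I.conc A
  | .neg c => (I.sem c)ᶜ
  | .inter c d => I.sem c ∩ I.sem d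
  | .ex r c => {d | ∃ e, (d, e) ∈ I.role r ∧ e ∈ I.sem c}

/-- A concept uses only symbols from the signature `(σC, σR)`. -/
def ALCConcept.inSig {C R : Type} (σC : Set C) (σR : Set R) : ALCConcept C R → Prop
  | .top => True
  | .atom A => A ∈ σC
  | .neg c => c.inSig σC σR
  | .inter c d => c.inSig σC σR ∧ d.inSig σC σR
  | .ex r c => r ∈ σR ∧ c.inSig σC σR

/-- ALCConcept names occurring in a concept. -/
def ALCConcept.cnames {C R : Type} : ALCConcept C R → Set C
  | .top => ∅
  | .atom A => {A}
  | .neg c => c.cnames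
  | .inter c d => c.cnames ∪ d.cnames
  | .ex _ c => c.cnames

/-- Role names occurring in a concept. -/
def ALCConcept.rnames {C R : Type} : ALCConcept C R → Set R
  | .top => ∅
  | .atom _ => ∅
  | .neg c => c.rnames
  | .inter c d => c.rnames ∪ d.rnames
  | .ex r c => {r} ∪ c.rnames

/-- Rename the symbols of a concept. -/
def ALCConcept.rename {C R : Type} (fC : C → C) (fR : R → R) : ALCConcept C R → ALCConcept C R
  | .top => .top
  | .atom A => .atom (fC A)
  | .neg c => .neg (c.rename fC fR)
  | .inter c d => .inter (c.rename fC fR) (d.rename fC fR)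
  | .ex r c => .ex (fR r) (c.rename fC fR)

/-- An interpretation is a model of an ontology (a set of concept inclusions). -/
def Interp.models {C R Δ : Type} (I : Interp C R Δ)
    (O : Set (ALCConcept C R × ALCConcept C R)) : Prop :=
  ∀ p ∈ O, I.sem p.1 ⊆ I.sem p.2

/-- ALCConcept names occurring in an ontology. -/
def ontCnames {C R : Type} (O : Set (ALCConcept C R × ALCConcept C R)) : Set C :=
  ⋃ p ∈ O, p.1.cnames ∪ p.2.cnames

/-- Role names occurring in an ontology. -/
def ontRnames {C R : Type} (O : Set (ALCConcept C R × ALCConcept C R)) : Set R :=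
  ⋃ p ∈ O, p.1.rnames ∪ p.2.rnames

/-- `S` is an ALC(Σ)-bisimulation between `I` and `J`. -/
structure IsBisim {C R Δ₁ Δ₂ : Type} (σC : Set C) (σR : Set R)
    (I : Interp C R Δ₁) (J : Interp C R Δ₂) (S : Set (Δ₁ × Δ₂)) : Prop where
  atomC : ∀ d e, (d, e) ∈ S → ∀ A ∈ σC, (d ∈ I.conc A ↔ e ∈ J.conc A)
  forth : ∀ d e, (d, e) ∈ S → ∀ r ∈ σR, ∀ d', (d, d') ∈ I.role r →
      ∃ e', (e, e') ∈ J.role r ∧ (d', e') ∈ S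
  back : ∀ d e, (d, e) ∈ S → ∀ r ∈ σR, ∀ e', (e, e') ∈ J.role r →
      ∃ d', (d, d') ∈ I.role r ∧ (d', e') ∈ S

/-- Implicit definability of a concept from a signature under an ontology:
any two models of `O` with the same domain agreeing on all symbols in the
signature give the concept the same extension. -/
def ImplicitlyDefinable {C R : Type} (O : Set (ALCConcept C R × ALCConcept C R))
    (c : ALCConcept C R) (σC : Set C) (σR : Set R) : Prop :=
  ∀ (Δ : Type) (I J : Interp C R Δ), I.models O → J.models O →
    (∀ A ∈ σC, I.conc A = J.conc A) → (∀ r ∈ σR, I.role r = J.role r) →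
    I.sem c = J.sem c


theorem bisim_invariance {C R Δ₁ Δ₂ : Type} (σC : Set C) (σR : Set R)
    (I : Interp C R Δ₁) (J : Interp C R Δ₂) (S : Set (Δ₁ × Δ₂))
    (hS : IsBisim σC σR I J S) (D : ALCConcept C R)
    (hc : D.cnames ⊆ σC) (hr : D.rnames ⊆ σR) :
    ∀ d e, (d, e) ∈ S → (d ∈ I.sem D ↔ e ∈ J.sem D) := by
  induction D with
  | top => intro d e _; simp [Interp.sem]
  | atom A =>
    intro d e hde
    exact hS.atomC d e hde A (hc (by simp [ALCConcept.cnames]))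
  | neg c ih =>
    intro d e hde
    simpa [Interp.sem] using not_congr (ih hc hr d e hde)
  | inter c₁ c₂ ih₁ ih₂ =>
    intro d e hde
    have h1 := ih₁ (fun x hx => hc (Set.mem_union_left _ hx))
      (fun x hx => hr (Set.mem_union_left _ hx)) d e hde
    have h2 := ih₂ (fun x hx => hc (Set.mem_union_right _ hx))
      (fun x hx => hr (Set.mem_union_right _ hx)) d e hde
    simp only [Interp.sem, Set.mem_inter_iff]
    exact and_congr h1 h2
  | ex r c ih =>
    intro d e hde
    have hrσ : r ∈ σR := hr (Set.mem_union_left _ rfl)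
    have ih' := ih hc (fun x hx => hr (Set.mem_union_right _ hx))
    simp only [Interp.sem, Set.mem_setOf_eq]
    constructor
    · rintro ⟨d', hdd', hd'⟩
      obtain ⟨e', he, hse⟩ := hS.forth d e hde r hrσ d' hdd'
      exact ⟨e', he, (ih' d' e' hse).mp hd'⟩
    · rintro ⟨e', hee', he'⟩
      obtain ⟨d', hd, hsd⟩ := hS.back d e hde r hrσ e' hee'
      exact ⟨d', hd, (ih' d' e' hsd).mpr he'⟩

/-- joint consistency modulo ALC(Σ)-bisimulations implies that no
ALC-interpolant for `C₁ ⊑ C₂` under `O₁ ∪ O₂` exists. -/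
theorem joint_consistency_implies_no_interpolant {C R Δ₁ Δ₂ : Type}
    (O₁ O₂ : Set (ALCConcept C R × ALCConcept C R)) (C₁ C₂ : ALCConcept C R)
    (I₁ : Interp C R Δ₁) (I₂ : Interp C R Δ₂)
    (h₁ : I₁.models (O₁ ∪ O₂)) (h₂ : I₂.models (O₁ ∪ O₂))
    (d₁ : Δ₁) (d₂ : Δ₂)
    (hd₁ : d₁ ∈ I₁.sem C₁) (hd₂ : d₂ ∈ I₂.sem (ALCConcept.neg C₂))
    (hbisim : ∃ S : Set (Δ₁ × Δ₂),
      IsBisim ((ontCnames O₁ ∪ C₁.cnames) ∩ (ontCnames O₂ ∪ C₂.cnames))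
              ((ontRnames O₁ ∪ C₁.rnames) ∩ (ontRnames O₂ ∪ C₂.rnames))
              I₁ I₂ S ∧ (d₁, d₂) ∈ S) :
    ¬ ∃ D : ALCConcept C R,
        D.cnames ⊆ (ontCnames O₁ ∪ C₁.cnames) ∩ (ontCnames O₂ ∪ C₂.cnames) ∧
        D.rnames ⊆ (ontRnames O₁ ∪ C₁.rnames) ∩ (ontRnames O₂ ∪ C₂.rnames) ∧
        (∀ (Δ : Type) (I : Interp C R Δ), I.models (O₁ ∪ O₂) → I.sem C₁ ⊆ I.sem D) ∧
        (∀ (Δ : Type) (I : Interp C R Δ), I.models (O₁ ∪ O₂) → I.sem D ⊆ I.sem C₂) := by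
  
  rintro ⟨D, hc, hr, hsub₁, hsub₂⟩
  obtain ⟨S, hS, hdS⟩ := hbisim
  have hD₁ : d₁ ∈ I₁.sem D := hsub₁ _ I₁ h₁ hd₁
  have hD₂ : d₂ ∈ I₂.sem D :=
    (bisim_invariance _ _ I₁ I₂ S hS D hc hr d₁ d₂ hdS).mp hD₁
  exact hd₂ (hsub₂ _ I₂ h₂ hD₂)
end

section
/- Consider the ALCIO ontology O = {A ⊑ {a}, {b} ⊓ B ⊑ ∃r.({a} ⊓ A), {b} ⊓ ¬B ⊑ ∃r.({a} ⊓ ¬A)}. Then O ⊨ A ≡ {a} ⊓ ∃r⁻.(B ⊓ {b}), i.e., in every model I of O, A^I = {a^I} ∩ {d : ∃e, (e,d) ∈ r^I ∧ e ∈ B^I ∧ e = b^I}. -/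
/-- in every model of the ALCIO ontology
`O = { A ⊑ {a}, {b} ⊓ B ⊑ ∃r.({a} ⊓ A), {b} ⊓ ¬B ⊑ ∃r.({a} ⊓ ¬A) }`
we have `A ≡ {a} ⊓ ∃r⁻.(B ⊓ {b})`. -/
theorem explicit_definition_via_inverse {Δ : Type} (aI bI : Δ)
    (AI BI : Set Δ) (rI : Set (Δ × Δ))
    (h1 : AI ⊆ {aI})
    (h2 : ∀ d, d = bI → d ∈ BI → ∃ e, (d, e) ∈ rI ∧ e = aI ∧ e ∈ AI)
    (h3 : ∀ d, d = bI → d ∉ BI → ∃ e, (d, e) ∈ rI ∧ e = aI ∧ e ∉ AI) :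
    AI = {aI} ∩ {d | ∃ e, (e, d) ∈ rI ∧ e ∈ BI ∧ e = bI} := by
  ext x
  constructor
  · intro hx
    have hxa : x = aI := h1 hx
    subst hxa
    refine ⟨rfl, ?_⟩
    by_cases hB : bI ∈ BI
    · obtain ⟨e, hr, he, _⟩ := h2 bI rfl hB
      subst he
      exact ⟨bI, hr, hB, rfl⟩
    · obtain ⟨e, hr, he, hnA⟩ := h3 bI rfl hB
      subst he
      exact absurd hx hnA
  · rintro ⟨hxa, e, hr, heB, heb⟩
    obtain ⟨e', hr', he', hA'⟩ := h2 bI rfl (heb ▸ heB)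
    subst he'
    simp only [Set.mem_singleton_iff] at hxa
    subst hxa
    exact hA'
end

section
/- Let O₁, O₂ be ALC ontologies and C₁, C₂ ALC concepts with Σ = sig(O₁,C₁) ∩ sig(O₂,C₂). Suppose no ALC-interpolant for C₁ ⊑ C₂ under O₁ ∪ O₂ exists. Then there is a model J of O₁ ∪ O₂ and an element d ∈ Δ^J such that d ∉ C₂^J and d ∈ D^J for every ALC(Σ)-concept D with O₁ ∪ O₂ ⊨ C₁ ⊑ D. (Compactness step of Theorem on interpolant existence.) -/
/-!
The `Σ`-concepts entailed by `C₁` under `O₁ ∪ O₂` contain `⊤` and are closed under conjunction,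
and when no interpolant exists each of them is satisfiable together with `¬C₂`. Compactness then
realizes all of them together with `¬C₂` at one point: take the ultraproduct of the witnessing
models, indexed by the entailed concepts themselves, along an ultrafilter containing for every
`D` the indices whose witness satisfies `D`. Closure under conjunction makes these index sets a
directed family. As `ALC` has no equality, Łoś's theorem holds on the plain product, without
a quotient.
-/

open Filter

namespace Interp

variable {C R : Type} {ι : Type} {Δ : ι → Type}

def ultraproduct (U : Ultrafilter ι) (I : ∀ i, Interp C R (Δ i)) : Interp C R (∀ i, Δ i) where
  conc A := {x | ∀ᶠ i in U, x i ∈ (I i).conc A}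
  role r := {p | ∀ᶠ i in U, (p.1 i, p.2 i) ∈ (I i).role r}

variable (U : Ultrafilter ι) (I : ∀ i, Interp C R (Δ i)) [∀ i, Nonempty (Δ i)]

theorem mem_sem_ultraproduct (c : ALCConcept C R) (x : ∀ i, Δ i) :
    x ∈ (ultraproduct U I).sem c ↔ ∀ᶠ i in U, x i ∈ (I i).sem c := by
  induction c generalizing x with
  | top => simp [sem]
  | atom A => rfl
  | neg c ih => exact (not_congr (ih x)).trans Ultrafilter.eventually_not.symm
  | inter c d ihc ihd => exact (and_congr (ihc x) (ihd x)).trans eventually_and.symm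
  | ex r c ih =>
    constructor
    · rintro ⟨y, hxy, hy⟩
      filter_upwards [show ∀ᶠ i in U, (x i, y i) ∈ (I i).role r from hxy, (ih y).1 hy]
        with i hxy hy
      exact ⟨y i, hxy, hy⟩
    · intro h
      -- a successor is chosen in every factor; it is a witness wherever one exists
      let y i := Classical.epsilon fun e => (x i, e) ∈ (I i).role r ∧ e ∈ (I i).sem c
      have hy : ∀ᶠ i in U, (x i, y i) ∈ (I i).role r ∧ y i ∈ (I i).sem c := by
        filter_upwards [h] with i hi using Classical.epsilon_spec hi
      exact ⟨y, hy.mono fun _ => And.left, (ih y).2 (hy.mono fun _ => And.right)⟩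

theorem models_ultraproduct {O : Set (ALCConcept C R × ALCConcept C R)}
    (hI : ∀ i, (I i).models O) : (ultraproduct U I).models O := by
  intro p hp x hx
  rw [mem_sem_ultraproduct] at hx ⊢
  filter_upwards [hx] with i hi using hI i p hp hi

end Interp

theorem ALCConcept.exists_models_forall_mem_sem_of_inter_mem {C R : Type}
    {O : Set (ALCConcept C R × ALCConcept C R)} {Γ : Set (ALCConcept C R)} {E : ALCConcept C R}
    (hΓ : Γ.Nonempty) (hinter : ∀ D ∈ Γ, ∀ D' ∈ Γ, ALCConcept.inter D D' ∈ Γ)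
    (hsat : ∀ D ∈ Γ, ∃ (Δ : Type) (I : Interp C R Δ) (d : Δ),
      I.models O ∧ d ∈ I.sem E ∧ d ∈ I.sem D) :
    ∃ (Δ : Type) (I : Interp C R Δ) (d : Δ), I.models O ∧ d ∈ I.sem E ∧ ∀ D ∈ Γ, d ∈ I.sem D := by
  choose Δ I d hmod hE hD using hsat
  have : Nonempty Γ := hΓ.to_subtype
  have : ∀ D : Γ, Nonempty (Δ D D.2) := fun D => ⟨d D D.2⟩
  let I' (F : Γ) := I F F.2
  let d' (F : Γ) := d F F.2
  let satisfying (D : ALCConcept C R) : Set Γ := {F | d' F ∈ (I' F).sem D}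
  let 𝓕 : Filter Γ := ⨅ D : Γ, 𝓟 (satisfying D)
  have : 𝓕.NeBot := by
    refine iInf_neBot_of_directed (fun D D' => ?_) fun D => principal_neBot_iff.2 ⟨D, hD D D.2⟩
    exact ⟨⟨_, hinter D D.2 D' D'.2⟩, principal_mono.2 fun _ hF => hF.1,
      principal_mono.2 fun _ hF => hF.2⟩
  let U := Ultrafilter.of 𝓕
  refine ⟨_, Interp.ultraproduct U I', d', Interp.models_ultraproduct U I' fun F => hmod F F.2,
    ?_, fun D hDΓ => ?_⟩ <;> rw [Interp.mem_sem_ultraproduct]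
  · exact Eventually.of_forall fun F => hE F F.2
  · exact Ultrafilter.of_le 𝓕 (mem_iInf_of_mem ⟨D, hDΓ⟩ (mem_principal_self _))

/-- compactness step: if no ALC-interpolant for `C₁ ⊑ C₂` under
`O₁ ∪ O₂` exists, there is a model `J` of `O₁ ∪ O₂` and an element `d` not
satisfying `C₂` but satisfying every ALC(Σ)-concept entailed by `C₁`. -/
theorem compactness_step {C R : Type}
    (O₁ O₂ : Set (ALCConcept C R × ALCConcept C R)) (C₁ C₂ : ALCConcept C R)
    (hno : ¬ ∃ D : ALCConcept C R,
        D.cnames ⊆ (ontCnames O₁ ∪ C₁.cnames) ∩ (ontCnames O₂ ∪ C₂.cnames) ∧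
        D.rnames ⊆ (ontRnames O₁ ∪ C₁.rnames) ∩ (ontRnames O₂ ∪ C₂.rnames) ∧
        (∀ (Δ : Type) (I : Interp C R Δ), I.models (O₁ ∪ O₂) → I.sem C₁ ⊆ I.sem D) ∧
        (∀ (Δ : Type) (I : Interp C R Δ), I.models (O₁ ∪ O₂) → I.sem D ⊆ I.sem C₂)) :
    ∃ (Δ : Type) (J : Interp C R Δ) (d : Δ), J.models (O₁ ∪ O₂) ∧ d ∉ J.sem C₂ ∧
      ∀ D : ALCConcept C R,
        D.cnames ⊆ (ontCnames O₁ ∪ C₁.cnames) ∩ (ontCnames O₂ ∪ C₂.cnames) →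
        D.rnames ⊆ (ontRnames O₁ ∪ C₁.rnames) ∩ (ontRnames O₂ ∪ C₂.rnames) →
        (∀ (Δ' : Type) (I : Interp C R Δ'), I.models (O₁ ∪ O₂) → I.sem C₁ ⊆ I.sem D) →
        d ∈ J.sem D := by
  set σC := (ontCnames O₁ ∪ C₁.cnames) ∩ (ontCnames O₂ ∪ C₂.cnames)
  set σR := (ontRnames O₁ ∪ C₁.rnames) ∩ (ontRnames O₂ ∪ C₂.rnames)
  let Γ : Set (ALCConcept C R) := {D | D.cnames ⊆ σC ∧ D.rnames ⊆ σR ∧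
    ∀ (Δ : Type) (I : Interp C R Δ), I.models (O₁ ∪ O₂) → I.sem C₁ ⊆ I.sem D}
  have htop : ALCConcept.top ∈ Γ :=
    ⟨Set.empty_subset _, Set.empty_subset _, fun _ _ _ => Set.subset_univ _⟩
  have hinter : ∀ D ∈ Γ, ∀ D' ∈ Γ, ALCConcept.inter D D' ∈ Γ :=
    fun _ ⟨hc, hr, hent⟩ _ ⟨hc', hr', hent'⟩ => ⟨Set.union_subset hc hc',
      Set.union_subset hr hr', fun Δ I hI => Set.subset_inter (hent Δ I hI) (hent' Δ I hI)⟩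
  have hsat : ∀ D ∈ Γ, ∃ (Δ : Type) (I : Interp C R Δ) (d : Δ),
      I.models (O₁ ∪ O₂) ∧ d ∈ I.sem (.neg C₂) ∧ d ∈ I.sem D := by
    intro D ⟨hc, hr, hent⟩
    by_contra! hD
    exact hno ⟨D, hc, hr, hent, fun Δ I hI d hd => by_contra fun hC₂ => hD Δ I d hI hC₂ hd⟩
  obtain ⟨Δ, J, d, hJ, hC₂, hΓ⟩ :=
    ALCConcept.exists_models_forall_mem_sem_of_inter_mem ⟨_, htop⟩ hinter hsat
  exact ⟨Δ, J, d, hJ, hC₂, fun D hc hr hent => hΓ D ⟨hc, hr, hent⟩⟩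
end
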